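/- The diagonal boundary matrix K(λ) = diag(f_α(λ), 1) with f_α(λ) = (iα+2λ)/(iα-2λ) satisfies the classical reflection equation [r(λ-η), K(λ)⊗K(η)] = (I⊗K(η)) r(λ+η) (K(λ)⊗I) - (K(λ)⊗I) r(λ+η) (I⊗K(η)), where r(λ) = P/(2λ) and P is the 4×4 permutation matrix on C²⊗C². -/

import Mathlib

open Complex Matrix Kronecker

/-- Permutation matrix on ℂ² ⊗ ℂ²: P(u⊗v) = v⊗u. -/
noncomputable def Pmat : Matrix (Fin 2 × Fin 2) (Fin 2 × Fin 2) ℂ :=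
  Matrix.of fun p q => if p.1 = q.2 ∧ p.2 = q.1 then 1 else 0

/-- Classical r-matrix r(λ) = P/(2λ). -/
noncomputable def rmat (l : ℂ) : Matrix (Fin 2 × Fin 2) (Fin 2 × Fin 2) ℂ :=
  (1 / (2 * l)) • Pmat

noncomputable def fα (α : ℝ) (l : ℂ) : ℂ := (I * α + 2 * l) / (I * α - 2 * l)

noncomputable def Kmat (α : ℝ) (l : ℂ) : Matrix (Fin 2) (Fin 2) ℂ :=
  !![fα α l, 0; 0, 1]

lemma fα_sub_fα (α : ℝ) {l η : ℂ} (hl : I * α - 2 * l ≠ 0) (hη : I * α - 2 * η ≠ 0) :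
    fα α η - fα α l = 4 * I * α * (η - l) / ((I * α - 2 * l) * (I * α - 2 * η)) := by
  unfold fα
  field_simp
  ring

lemma one_sub_fα_mul_fα (α : ℝ) {l η : ℂ} (hl : I * α - 2 * l ≠ 0) (hη : I * α - 2 * η ≠ 0) :
    1 - fα α l * fα α η = -(4 * I * α * (l + η)) / ((I * α - 2 * l) * (I * α - 2 * η)) := by
  unfold fα
  field_simp
  ring

lemma fα_reflection (α : ℝ) {l η : ℂ} (hlη : l - η ≠ 0) (hlη' : l + η ≠ 0)
    (hl : I * α - 2 * l ≠ 0) (hη : I * α - 2 * η ≠ 0) :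
    1 / (2 * (l - η)) * (fα α η - fα α l) = 1 / (2 * (l + η)) * (1 - fα α l * fα α η) := by
  rw [fα_sub_fα α hl hη, one_sub_fα_mul_fα α hl hη]
  field_simp
  ring

lemma kronecker_one_eq_diagonal {R : Type*} [Semiring R] (a : R) :
    !![a, 0; 0, 1] ⊗ₖ (1 : Matrix (Fin 2) (Fin 2) R) = diagonal fun p => ![a, 1] p.1 := by
  rw [← diagonal_vec2, ← diagonal_one, diagonal_kronecker_diagonal]
  simp

lemma one_kronecker_eq_diagonal {R : Type*} [Semiring R] (b : R) :
    (1 : Matrix (Fin 2) (Fin 2) R) ⊗ₖ !![b, 0; 0, 1] = diagonal fun p => ![b, 1] p.2 := by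
  rw [← diagonal_vec2, ← diagonal_one, diagonal_kronecker_diagonal]
  simp

lemma diag_kronecker_diag {R : Type*} [Semiring R] (a b : R) :
    !![a, 0; 0, 1] ⊗ₖ !![b, 0; 0, 1] = diagonal fun p => ![a, 1] p.1 * ![b, 1] p.2 := by
  rw [← diagonal_vec2, ← diagonal_vec2, diagonal_kronecker_diagonal]

/-- All factors but `P` are diagonal, so both sides vanish except on the two entries linking
`e₀ ⊗ e₁` and `e₁ ⊗ e₀`, where they equal `±c (b - a)` and `±d (1 - a b)`. -/
theorem reflection_equation_diag (a b c d : ℂ) (h : c * (b - a) = d * (1 - a * b)) :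
    c • Pmat * (!![a, 0; 0, 1] ⊗ₖ !![b, 0; 0, 1]) - (!![a, 0; 0, 1] ⊗ₖ !![b, 0; 0, 1]) * c • Pmat =
      ((1 : Matrix (Fin 2) (Fin 2) ℂ) ⊗ₖ !![b, 0; 0, 1]) * d • Pmat *
        (!![a, 0; 0, 1] ⊗ₖ (1 : Matrix (Fin 2) (Fin 2) ℂ)) -
      (!![a, 0; 0, 1] ⊗ₖ (1 : Matrix (Fin 2) (Fin 2) ℂ)) * d • Pmat *
        ((1 : Matrix (Fin 2) (Fin 2) ℂ) ⊗ₖ !![b, 0; 0, 1]) := by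
  rw [diag_kronecker_diag, kronecker_one_eq_diagonal, one_kronecker_eq_diagonal]
  ext ⟨i, j⟩ ⟨k, m⟩
  simp only [Matrix.sub_apply, Matrix.smul_mul, Matrix.mul_smul, mul_diagonal, diagonal_mul,
    Matrix.smul_apply, Pmat, of_apply, smul_eq_mul]
  fin_cases i <;> fin_cases j <;> fin_cases k <;> fin_cases m <;> simp <;> grind

theorem stmt3_general (α : ℝ) (l η : ℂ)
    (hlη : l - η ≠ 0) (hlη' : l + η ≠ 0)
    (hl1 : l ≠ I * α / 2)
    (hη1 : η ≠ I * α / 2) :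
    rmat (l - η) * (Kmat α l ⊗ₖ Kmat α η) - (Kmat α l ⊗ₖ Kmat α η) * rmat (l - η) =
      ((1 : Matrix (Fin 2) (Fin 2) ℂ) ⊗ₖ Kmat α η) * rmat (l + η) *
        (Kmat α l ⊗ₖ (1 : Matrix (Fin 2) (Fin 2) ℂ)) -
      (Kmat α l ⊗ₖ (1 : Matrix (Fin 2) (Fin 2) ℂ)) * rmat (l + η) *
        ((1 : Matrix (Fin 2) (Fin 2) ℂ) ⊗ₖ Kmat α η) := by
  have hl : I * α - 2 * l ≠ 0 := fun h => hl1 (by linear_combination -h / 2)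
  have hη : I * α - 2 * η ≠ 0 := fun h => hη1 (by linear_combination -h / 2)
  exact reflection_equation_diag _ _ _ _ (fα_reflection α hlη hlη' hl hη)

theorem stmt3 (α : ℝ) (l η : ℂ)
    (hlη : l - η ≠ 0) (hlη' : l + η ≠ 0)
    (hl1 : l ≠ I * α / 2) (hl2 : l ≠ -(I * α / 2))
    (hη1 : η ≠ I * α / 2) (hη2 : η ≠ -(I * α / 2)) :
    rmat (l - η) * (Kmat α l ⊗ₖ Kmat α η) - (Kmat α l ⊗ₖ Kmat α η) * rmat (l - η) =
      ((1 : Matrix (Fin 2) (Fin 2) ℂ) ⊗ₖ Kmat α η) * rmat (l + η) *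
        (Kmat α l ⊗ₖ (1 : Matrix (Fin 2) (Fin 2) ℂ)) -
      (Kmat α l ⊗ₖ (1 : Matrix (Fin 2) (Fin 2) ℂ)) * rmat (l + η) *
        ((1 : Matrix (Fin 2) (Fin 2) ℂ) ⊗ₖ Kmat α η) :=
  stmt3_general α l η hlη hlη' hl1 hη1
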